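/- In the triangular-array incomplete U-statistic setting, the sequence ξ_i = (1/(nθ_n))(∑_{j≠i} Ψ_j(i) + ∑_{j<i} Φ̃(i,j)), i=1,...,n, is a martingale difference sequence with respect to the filtration F_i = σ(X_{n1},...,X_{ni}, (Z_{lm})_{l≤i, m≠l}): each ξ_i is F_i-measurable and E[ξ_i | F_{i-1}] = 0 almost surely. -/

import Mathlib

open MeasureTheory ProbabilityTheory Filter Finset Topology

namespace IncompleteU

/-- Triangular-array incomplete U-statistic setting. -/
structure Setting (Ω : Type*) [MeasureSpace Ω] : Type _ where
  /-- dilution probability `p_n` -/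
  p : ℕ → ℝ
  /-- the triangular array `X_{n i}` -/
  X : ℕ → ℕ → Ω → ℝ
  /-- the dilution variables `Z_{ij}` (row `n`) -/
  Z : ℕ → ℕ → ℕ → Ω → ℝ
  /-- the kernels `h_n` -/
  h : ℕ → ℝ → ℝ → ℝ
  hp_pos : ∀ n, 0 < p n
  hp_le : ∀ n, p n ≤ 1
  measX : ∀ n i, Measurable (X n i)
  measZ : ∀ n i j, Measurable (Z n i j)
  meash : ∀ n, Measurable (Function.uncurry (h n))
  symmh : ∀ n x y, h n x y = h n y x
  symmZ : ∀ n i j, Z n i j = Z n j i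
  Z01 : ∀ n i j ω, Z n i j ω = 0 ∨ Z n i j ω = 1
  Zlaw : ∀ n i j, i ≠ j →
    (ℙ : Measure Ω).map (Z n i j) =
      ENNReal.ofReal (p n) • Measure.dirac (1 : ℝ) +
        ENNReal.ofReal (1 - p n) • Measure.dirac (0 : ℝ)
  Xid : ∀ n i j, IdentDistrib (X n i) (X n j) ℙ ℙ
  indep : ∀ n, iIndepFun
      (fun t : ℕ ⊕ {q : ℕ × ℕ // q.1 < q.2} =>
        Sum.elim (X n) (fun q => Z n q.1.1 q.1.2) t) ℙ
  centered : ∀ n i j, i ≠ j → ∫ ω, h n (X n i ω) (X n j ω) ∂ℙ = 0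
  sqint : ∀ n i j, i ≠ j → Integrable (fun ω => (h n (X n i ω) (X n j ω)) ^ 2) ℙ

variable {Ω : Type*} [MeasureSpace Ω] [IsProbabilityMeasure (ℙ : Measure Ω)]
variable (S : Setting Ω)

/-- `h_n(X_{ni}, X_{nj})` as a random variable. -/
noncomputable def hXX (n i j : ℕ) : Ω → ℝ := fun ω => S.h n (S.X n i ω) (S.X n j ω)

/-- `E[h_n(X_{ni}, X_{nj}) | X_{ni}]`. -/
noncomputable def condh (n i j : ℕ) : Ω → ℝ :=
  condExp (MeasurableSpace.comap (S.X n i) inferInstance) ℙ (hXX S n i j)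

/-- `Φ(i,j) = Z_{ij} h(X_i, X_j)`. -/
noncomputable def Phi (n i j : ℕ) : Ω → ℝ := fun ω => S.Z n i j ω * S.h n (S.X n i ω) (S.X n j ω)

/-- `Psi S n i j` is `Ψ_j(i) = Z_{ij} E[h(X_i, X_j) | X_i]`. -/
noncomputable def Psi (n i j : ℕ) : Ω → ℝ := fun ω => S.Z n i j ω * condh S n i j ω

/-- `Φ̃(i,j) = Φ(i,j) − Ψ_j(i) − Ψ_i(j)`. -/
noncomputable def PhiT (n i j : ℕ) : Ω → ℝ :=
  fun ω => Phi S n i j ω - Psi S n i j ω - Psi S n j i ω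

/-- `h̃(X_i,X_j) = h(X_i,X_j) − E[h(X_i,X_j)|X_i] − E[h(X_i,X_j)|X_j]`. -/
noncomputable def hT (n i j : ℕ) : Ω → ℝ :=
  fun ω => hXX S n i j ω - condh S n i j ω - condh S n j i ω

/-- `β_n² = E[Φ(1,2)²]`. -/
noncomputable def beta2 (n : ℕ) : ℝ := ∫ ω, (Phi S n 1 2 ω) ^ 2 ∂ℙ

/-- `γ_n² = E[Ψ_2(1)²]`. -/
noncomputable def gamma2 (n : ℕ) : ℝ := ∫ ω, (Psi S n 1 2 ω) ^ 2 ∂ℙ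

/-- `θ_n² = n p_n γ_n² + β_n²/2`. -/
noncomputable def theta2 (n : ℕ) : ℝ := n * S.p n * gamma2 S n + beta2 S n / 2

noncomputable def theta (n : ℕ) : ℝ := Real.sqrt (theta2 S n)

/-- The incomplete U-statistic `U_n`. -/
noncomputable def U (n : ℕ) : Ω → ℝ :=
  fun ω => ((n.choose 2 : ℝ))⁻¹ * ∑ i ∈ Icc 1 n, ∑ j ∈ Ioc i n, Phi S n i j ω

/-- `G_k(i,j) = E[Φ(i,k)Φ(j,k) | X_i, X_j, Z_{ik}, Z_{jk}]`. -/
noncomputable def G (n k i j : ℕ) : Ω → ℝ :=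
  condExp (MeasurableSpace.comap
      (fun ω => (S.X n i ω, S.X n j ω, S.Z n i k ω, S.Z n j k ω)) inferInstance) ℙ
    (fun ω => Phi S n i k ω * Phi S n j k ω)

/-- `G̃_k(i,j) = E[Φ̃(i,k)Φ̃(j,k) | X_i, X_j, Z_{ik}, Z_{jk}]`. -/
noncomputable def GT (n k i j : ℕ) : Ω → ℝ :=
  condExp (MeasurableSpace.comap
      (fun ω => (S.X n i ω, S.X n j ω, S.Z n i k ω, S.Z n j k ω)) inferInstance) ℙ
    (fun ω => PhiT S n i k ω * PhiT S n j k ω)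

/-- `H(i,j) = E[h(X_i,X_k) h(X_j,X_k) | X_i, X_j]` (computed with auxiliary index `k`). -/
noncomputable def Hh (n k i j : ℕ) : Ω → ℝ :=
  condExp (MeasurableSpace.comap (fun ω => (S.X n i ω, S.X n j ω)) inferInstance) ℙ
    (fun ω => hXX S n i k ω * hXX S n j k ω)

/-- `H̃(i,j) = E[h̃(X_i,X_k) h̃(X_j,X_k) | X_i, X_j]` (computed with auxiliary index `k`). -/
noncomputable def HT (n k i j : ℕ) : Ω → ℝ :=
  condExp (MeasurableSpace.comap (fun ω => (S.X n i ω, S.X n j ω)) inferInstance) ℙ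
    (fun ω => hT S n i k ω * hT S n j k ω)

/-- `ξ_i = ξ_i⁽¹⁾ + ξ_i⁽²⁾`. -/
noncomputable def xi (n i : ℕ) : Ω → ℝ := fun ω =>
  (1 / (n * theta S n)) * ((∑ j ∈ (Icc 1 n).erase i, Psi S n i j ω) +
    ∑ j ∈ Ico 1 i, PhiT S n i j ω)

/-- The σ-field `F_i = σ(X_1,…,X_i, Z_{lm} : l ≤ i, m ≠ l)`. -/
noncomputable def F (n i : ℕ) : MeasurableSpace Ω :=
  (⨆ k ∈ Icc 1 i, MeasurableSpace.comap (S.X n k) inferInstance) ⊔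
    (⨆ l ∈ Icc 1 i, ⨆ m ∈ (Icc 1 n).erase l, MeasurableSpace.comap (S.Z n l m) inferInstance)



section Aux

/-- helper: Indep σ-algebras give product formula for integrals of measurable functions. -/
lemma indep_integral_mul' {Ω : Type*} {m₁ m₂ m0 : MeasurableSpace Ω} {μ : Measure Ω}
    (h1 : m₁ ≤ m0) (h2 : m₂ ≤ m0)
    (hindep : Indep m₁ m₂ μ) {u v : Ω → ℝ} (hu : Measurable[m₁] u) (hv : Measurable[m₂] v)
    (hui : Integrable u μ) (hvi : Integrable v μ) :
    ∫ ω, u ω * v ω ∂μ = (∫ ω, u ω ∂μ) * ∫ ω, v ω ∂μ := by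
  have hIF : IndepFun u v μ := by
    exact indep_of_indep_of_le_left (indep_of_indep_of_le_right hindep hv.comap_le) hu.comap_le
  exact hIF.integral_fun_mul_eq_mul_integral ((hu.mono h1 le_rfl).aestronglyMeasurable)
    ((hv.mono h2 le_rfl).aestronglyMeasurable)

/-- The freezing lemma: if `g` is `m₁`-measurable and `m₁ ⊥ m₂`, `mc ≤ m₁`, then
`E[g | mc ⊔ m₂] = E[g | mc]`. -/
lemma condexp_sup_indep' {Ω : Type*} {m₁ m₂ mc m0 : MeasurableSpace Ω} {μ : Measure Ω}
    [IsProbabilityMeasure μ] (h1 : m₁ ≤ m0) (h2 : m₂ ≤ m0)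
    (hc : mc ≤ m₁) (hindep : Indep m₁ m₂ μ) {g : Ω → ℝ}
    (hg : StronglyMeasurable[m₁] g) (hgint : Integrable g μ) :
    μ[g | mc ⊔ m₂] =ᵐ[μ] μ[g | mc] := by
  have hcm0 : mc ≤ m0 := hc.trans h1
  have hsup : mc ⊔ m₂ ≤ m0 := sup_le hcm0 h2
  have key : ∀ s : Set Ω, MeasurableSet[mc ⊔ m₂] s →
      ∫ x in s, (μ[g|mc]) x ∂μ = ∫ x in s, g x ∂μ := by
    have hgen : (mc ⊔ m₂ : MeasurableSpace Ω) = MeasurableSpace.generateFrom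
        {u | ∃ a, MeasurableSet[mc] a ∧ ∃ b, MeasurableSet[m₂] b ∧ u = a ∩ b} := by
      refine le_antisymm (sup_le ?_ ?_) (MeasurableSpace.generateFrom_le ?_)
      · intro a ha
        exact MeasurableSpace.measurableSet_generateFrom
          ⟨a, ha, Set.univ, MeasurableSet.univ, (Set.inter_univ a).symm⟩
      · intro b hb
        exact MeasurableSpace.measurableSet_generateFrom
          ⟨Set.univ, MeasurableSet.univ, b, hb, (Set.univ_inter b).symm⟩
      · rintro u ⟨a, ha, b, hb, rfl⟩
        exact ((le_sup_left : mc ≤ mc ⊔ m₂) _ ha).inter ((le_sup_right : m₂ ≤ mc ⊔ m₂) _ hb)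
    have hpi : IsPiSystem
        {u : Set Ω | ∃ a, MeasurableSet[mc] a ∧ ∃ b, MeasurableSet[m₂] b ∧ u = a ∩ b} := by
      rintro u ⟨a, ha, b, hb, rfl⟩ u' ⟨a', ha', b', hb', rfl⟩ -
      exact ⟨a ∩ a', ha.inter ha', b ∩ b', hb.inter hb', Set.inter_inter_inter_comm a b a' b'⟩
    have hprod : ∀ {w : Ω → ℝ}, StronglyMeasurable[m₁] w → Integrable w μ →
        ∀ {a b : Set Ω}, MeasurableSet[mc] a → MeasurableSet[m₂] b →
        ∫ x in a ∩ b, w x ∂μ = (∫ x in a, w x ∂μ) * (μ b).toReal := by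
      intro w hw hwi a b ha hb
      have hmab : MeasurableSet[m0] (a ∩ b) := (hcm0 _ ha).inter (h2 _ hb)
      have heq : (a ∩ b).indicator w =
          fun ω => (a.indicator w ω) * (b.indicator (fun _ => (1:ℝ)) ω) := by
        ext ω
        by_cases hωa : ω ∈ a <;> by_cases hωb : ω ∈ b <;>
          simp [Set.indicator_apply, hωa, hωb]
      have hui : Integrable (a.indicator w) μ := hwi.indicator (hcm0 _ ha)
      have hvi : Integrable (b.indicator (fun _ => (1:ℝ))) μ :=
        (integrable_const (1:ℝ)).indicator (h2 _ hb)
      calc ∫ x in a ∩ b, w x ∂μ = ∫ x, (a ∩ b).indicator w x ∂μ :=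
            (integral_indicator hmab).symm
        _ = ∫ x, (a.indicator w x) * (b.indicator (fun _ => (1:ℝ)) x) ∂μ := by rw [heq]
        _ = (∫ x, a.indicator w x ∂μ) * ∫ x, b.indicator (fun _ => (1:ℝ)) x ∂μ :=
            indep_integral_mul' h1 h2 hindep
              ((hw.measurable).indicator (hc _ ha))
              (measurable_const.indicator hb) hui hvi
        _ = (∫ x in a, w x ∂μ) * (μ b).toReal := by
            rw [integral_indicator (hcm0 _ ha), integral_indicator (h2 _ hb)]
            simp [Measure.restrict_apply_univ, measureReal_def]
    have hcond_sm : StronglyMeasurable[m₁] (μ[g|mc]) := stronglyMeasurable_condExp.mono hc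
    refine fun s hs => MeasurableSpace.induction_on_inter
      (C := fun s _ => ∫ x in s, (μ[g|mc]) x ∂μ = ∫ x in s, g x ∂μ) hgen hpi ?_ ?_ ?_ ?_ s hs
    · simp
    · rintro u ⟨a, ha, b, hb, rfl⟩
      rw [hprod hcond_sm integrable_condExp ha hb, hprod hg hgint ha hb,
        setIntegral_condExp hcm0 hgint ha]
    · intro t htm ht
      have htm0 : MeasurableSet[m0] t := hsup _ htm
      rw [setIntegral_compl htm0 integrable_condExp, setIntegral_compl htm0 hgint, ht,
        integral_condExp hcm0]
    · intro f hdisj hfm hf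
      have hfm0 : ∀ k, MeasurableSet[m0] (f k) := fun k => hsup _ (hfm k)
      rw [integral_iUnion hfm0 hdisj integrable_condExp.integrableOn,
        integral_iUnion hfm0 hdisj hgint.integrableOn]
      exact tsum_congr hf
  exact (ae_eq_condExp_of_forall_setIntegral_eq hsup hgint
    (fun s _ _ => integrable_condExp.integrableOn)
    (fun s hs _ => key s hs)
    ((stronglyMeasurable_condExp (m := mc) (μ := μ) (f := g)).mono
      (le_sup_left : mc ≤ mc ⊔ m₂)).aestronglyMeasurable).symm

variable {Ω : Type*} [MeasureSpace Ω] [IsProbabilityMeasure (ℙ : Measure Ω)] (S : Setting Ω)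

/-- The whole family of random variables, indexed by `ℕ ⊕ pairs`. -/
noncomputable def fam (n : ℕ) : (ℕ ⊕ {q : ℕ × ℕ // q.1 < q.2}) → Ω → ℝ :=
  fun t => Sum.elim (S.X n) (fun q => S.Z n q.1.1 q.1.2) t

lemma fam_indep (n : ℕ) :
    iIndep (fun t => MeasurableSpace.comap (fam S n t) inferInstance) ℙ := S.indep n

lemma fam_le (n : ℕ) : ∀ t, MeasurableSpace.comap (fam S n t) inferInstance ≤
    (inferInstance : MeasurableSpace Ω) := by
  rintro (k | q)
  · exact (S.measX n k).comap_le
  · exact (S.measZ n q.1.1 q.1.2).comap_le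

lemma meas_hXX (n i j : ℕ) : Measurable (hXX S n i j) :=
  (S.meash n).comp ((S.measX n i).prodMk (S.measX n j))

lemma int_hXX (n i j : ℕ) (hij : i ≠ j) : Integrable (hXX S n i j) ℙ :=
  ((memLp_two_iff_integrable_sq (meas_hXX S n i j).aestronglyMeasurable).2
    (S.sqint n i j hij)).integrable one_le_two

lemma norm_Z_le (n i j : ℕ) : ∀ ω, ‖S.Z n i j ω‖ ≤ 1 := by
  intro ω; rcases S.Z01 n i j ω with h | h <;> simp [h]

lemma int_condh (n i j : ℕ) : Integrable (condh S n i j) ℙ := integrable_condExp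

lemma int_Psi (n i j : ℕ) : Integrable (Psi S n i j) ℙ :=
  (int_condh S n i j).bdd_mul (S.measZ n i j).aestronglyMeasurable (ae_of_all _ (norm_Z_le S n i j))

lemma int_Phi (n i j : ℕ) (hij : i ≠ j) : Integrable (Phi S n i j) ℙ :=
  (int_hXX S n i j hij).bdd_mul (S.measZ n i j).aestronglyMeasurable (ae_of_all _ (norm_Z_le S n i j))

lemma int_hT (n i j : ℕ) (hij : i ≠ j) : Integrable (hT S n i j) ℙ :=
  ((int_hXX S n i j hij).sub (int_condh S n i j)).sub (int_condh S n j i)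

lemma int_PhiT (n i j : ℕ) (hij : i ≠ j) : Integrable (PhiT S n i j) ℙ :=
  ((int_Phi S n i j hij).sub (int_Psi S n i j)).sub (int_Psi S n j i)

lemma integral_condh (n i j : ℕ) (hij : i ≠ j) : ∫ ω, condh S n i j ω ∂ℙ = 0 := by
  unfold condh
  rw [integral_condExp (S.measX n i).comap_le]
  exact S.centered n i j hij

lemma comapX_le_F {n k r : ℕ} (h1 : 1 ≤ k) (h2 : k ≤ r) :
    MeasurableSpace.comap (S.X n k) inferInstance ≤ F S n r :=
  le_trans (le_biSup (fun k => MeasurableSpace.comap (S.X n k) inferInstance)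
    (Finset.mem_Icc.mpr ⟨h1, h2⟩)) le_sup_left

lemma comapZ_le_F {n l m r : ℕ} (h1 : 1 ≤ l) (h2 : l ≤ r) (h3 : m ∈ Finset.Icc 1 n)
    (h4 : m ≠ l) : MeasurableSpace.comap (S.Z n l m) inferInstance ≤ F S n r := by
  refine le_trans (le_trans (le_biSup (fun m => MeasurableSpace.comap (S.Z n l m) inferInstance)
    (Finset.mem_erase.mpr ⟨h4, h3⟩)) ?_) le_sup_right
  exact le_biSup (fun l => ⨆ m ∈ (Icc 1 n).erase l,
    MeasurableSpace.comap (S.Z n l m) inferInstance) (Finset.mem_Icc.mpr ⟨h1, h2⟩)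

lemma F_le (n r : ℕ) : F S n r ≤ (inferInstance : MeasurableSpace Ω) :=
  sup_le (iSup₂_le fun k _ => (S.measX n k).comap_le)
    (iSup₂_le fun l _ => iSup₂_le fun m _ => (S.measZ n l m).comap_le)

/-- The index set generating `F S n r`. -/
def TG (n r : ℕ) : Set (ℕ ⊕ {q : ℕ × ℕ // q.1 < q.2}) :=
  Sum.inl '' Set.Iic r ∪ Sum.inr '' {q | q.val.1 ≤ r ∨ q.val.2 ≤ r}

lemma inl_not_mem_TG {n r i : ℕ} (h : r < i) : Sum.inl i ∉ TG n r := by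
  rintro (⟨k, hk, hke⟩ | ⟨q, _, hqe⟩)
  · cases hke; exact absurd (Set.mem_Iic.mp hk) (by omega)
  · cases hqe

lemma inr_not_mem_TG {n r : ℕ} {q : {q : ℕ × ℕ // q.1 < q.2}} (h1 : r < q.val.1)
    (h2 : r < q.val.2) : Sum.inr q ∉ TG n r := by
  rintro (⟨k, _, hke⟩ | ⟨q', hq', hqe⟩)
  · cases hke
  · cases hqe
    rcases hq' with h | h <;> omega

lemma F_le_biSup (n r : ℕ) :
    F S n r ≤ ⨆ t ∈ TG n r, MeasurableSpace.comap (fam S n t) inferInstance := by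
  apply sup_le
  · refine iSup₂_le fun k hk => ?_
    have ht : (Sum.inl k : ℕ ⊕ {q : ℕ × ℕ // q.1 < q.2}) ∈ TG n r :=
      Or.inl ⟨k, (Finset.mem_Icc.mp hk).2, rfl⟩
    exact le_biSup (fun t => MeasurableSpace.comap (fam S n t) inferInstance) ht
  · refine iSup₂_le fun l hl => iSup₂_le fun m hm => ?_
    have hml : m ≠ l := (Finset.mem_erase.mp hm).1
    rcases lt_or_gt_of_ne hml with hlt | hgt
    · -- m < l : use pair (m, l)
      have hz : S.Z n l m = S.Z n m l := S.symmZ n l m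
      rw [hz]
      have ht : (Sum.inr ⟨(m, l), hlt⟩ : ℕ ⊕ {q : ℕ × ℕ // q.1 < q.2}) ∈ TG n r :=
        Or.inr ⟨⟨(m, l), hlt⟩, Or.inr (Finset.mem_Icc.mp hl).2, rfl⟩
      exact le_biSup (fun t => MeasurableSpace.comap (fam S n t) inferInstance) ht
    · -- l < m : use pair (l, m)
      have ht : (Sum.inr ⟨(l, m), hgt⟩ : ℕ ⊕ {q : ℕ × ℕ // q.1 < q.2}) ∈ TG n r :=
        Or.inr ⟨⟨(l, m), hgt⟩, Or.inl (Finset.mem_Icc.mp hl).2, rfl⟩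
      exact le_biSup (fun t => MeasurableSpace.comap (fam S n t) inferInstance) ht

lemma indep_fam (n : ℕ) {T T' : Set (ℕ ⊕ {q : ℕ × ℕ // q.1 < q.2})} (h : Disjoint T T') :
    Indep (⨆ t ∈ T, MeasurableSpace.comap (fam S n t) inferInstance)
      (⨆ t ∈ T', MeasurableSpace.comap (fam S n t) inferInstance) ℙ :=
  indep_iSup_of_disjoint (fam_le S n) (fam_indep S n) h

lemma comap_X_le_biSup {n k : ℕ} {T : Set (ℕ ⊕ {q : ℕ × ℕ // q.1 < q.2})}
    (ht : Sum.inl k ∈ T) : MeasurableSpace.comap (S.X n k) inferInstance ≤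
      ⨆ t ∈ T, MeasurableSpace.comap (fam S n t) inferInstance :=
  le_biSup (fun t => MeasurableSpace.comap (fam S n t) inferInstance) ht

lemma comap_Z_le_biSup {n : ℕ} {q : {q : ℕ × ℕ // q.1 < q.2}}
    {T : Set (ℕ ⊕ {q : ℕ × ℕ // q.1 < q.2})}
    (ht : Sum.inr q ∈ T) : MeasurableSpace.comap (S.Z n q.val.1 q.val.2) inferInstance ≤
      ⨆ t ∈ T, MeasurableSpace.comap (fam S n t) inferInstance :=
  le_biSup (fun t => MeasurableSpace.comap (fam S n t) inferInstance) ht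

lemma condexp_condh_F {n i j r : ℕ} (hij : i ≠ j) (hri : r < i) :
    condExp (F S n r) ℙ (condh S n i j) =ᵐ[ℙ] fun _ => (0 : ℝ) := by
  have hind : Indep (MeasurableSpace.comap (S.X n i) inferInstance) (F S n r) ℙ := by
    refine indep_of_indep_of_le_left (indep_of_indep_of_le_right
      (indep_fam S n (T := {Sum.inl i}) (T' := TG n r)
        (Set.disjoint_singleton_left.mpr (inl_not_mem_TG hri))) (F_le_biSup S n r)) ?_
    exact comap_X_le_biSup S rfl
  have h := condExp_indep_eq (μ := ℙ) (S.measX n i).comap_le (F_le S n r)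
    (stronglyMeasurable_condExp : StronglyMeasurable[MeasurableSpace.comap (S.X n i)
      inferInstance] (condh S n i j)) hind
  refine h.trans ?_
  have h0 : ∫ x, (condExp (MeasurableSpace.comap (S.X n i) inferInstance) ℙ
      (hXX S n i j)) x ∂ℙ = (0 : ℝ) := integral_condh S n i j hij
  rw [h0]

lemma Z_measF_of_lt {n i j : ℕ} (hj1 : 1 ≤ j) (hjlt : j < i) (hi1 : 1 ≤ i) (hin : i ≤ n) :
    Measurable[F S n (i - 1)] (S.Z n i j) := by
  rw [S.symmZ n i j]
  exact Measurable.of_comap_le (comapZ_le_F S hj1 (by omega)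
    (Finset.mem_Icc.mpr ⟨hi1, hin⟩) (by omega))

lemma condexp_Psi_F_of_lt {n i j : ℕ} (hj1 : 1 ≤ j) (hjlt : j < i) (hi1 : 1 ≤ i) (hin : i ≤ n) :
    condExp (F S n (i - 1)) ℙ (Psi S n i j) =ᵐ[ℙ] fun _ => (0 : ℝ) := by
  have hZG := Z_measF_of_lt S hj1 hjlt hi1 hin
  have hPsi : Psi S n i j = S.Z n i j * condh S n i j := rfl
  have hmul := condExp_mul_of_stronglyMeasurable_left (m := F S n (i - 1)) (μ := ℙ)
    hZG.stronglyMeasurable (by rw [← hPsi]; exact int_Psi S n i j) (int_condh S n i j)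
  have hc := condexp_condh_F S (n := n) (i := i) (j := j) (r := i - 1)
    (show i ≠ j by omega) (show i - 1 < i by omega)
  rw [hPsi]
  filter_upwards [hmul, hc] with ω h1 h2
  rw [h1, Pi.mul_apply, h2]
  simp

lemma condexp_Psi_F_of_gt {n i j : ℕ} (hilt : i < j) (hi1 : 1 ≤ i) :
    condExp (F S n (i - 1)) ℙ (Psi S n i j) =ᵐ[ℙ] fun _ => (0 : ℝ) := by
  have hq : (i, j).1 < (i, j).2 := hilt
  have hle1 : (MeasurableSpace.comap (S.X n i) inferInstance ⊔
      MeasurableSpace.comap (S.Z n i j) inferInstance) ≤ (inferInstance : MeasurableSpace Ω) :=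
    sup_le (S.measX n i).comap_le (S.measZ n i j).comap_le
  have hsm : StronglyMeasurable[MeasurableSpace.comap (S.X n i) inferInstance ⊔
      MeasurableSpace.comap (S.Z n i j) inferInstance] (Psi S n i j) := by
    apply Measurable.stronglyMeasurable
    exact (Measurable.of_comap_le le_sup_right).mul
      ((stronglyMeasurable_condExp (m := MeasurableSpace.comap (S.X n i)
        inferInstance)).measurable.mono le_sup_left le_rfl)
  have hind : Indep (MeasurableSpace.comap (S.X n i) inferInstance ⊔
      MeasurableSpace.comap (S.Z n i j) inferInstance) (F S n (i - 1)) ℙ := by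
    have hdisj : Disjoint ({Sum.inl i, Sum.inr ⟨(i, j), hq⟩} :
        Set (ℕ ⊕ {q : ℕ × ℕ // q.1 < q.2})) (TG n (i - 1)) := by
      rw [Set.disjoint_left]
      rintro t ht
      simp only [Set.mem_insert_iff, Set.mem_singleton_iff] at ht
      rcases ht with rfl | rfl
      · exact inl_not_mem_TG (by omega)
      · exact inr_not_mem_TG (by simp; omega) (by simp; omega)
    refine indep_of_indep_of_le_left (indep_of_indep_of_le_right
      (indep_fam S n hdisj) (F_le_biSup S n (i - 1))) ?_
    exact sup_le (comap_X_le_biSup S (Set.mem_insert _ _))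
      (comap_Z_le_biSup S (q := ⟨(i, j), hq⟩) (Set.mem_insert_of_mem _ rfl))
  have h := condExp_indep_eq (μ := ℙ) hle1 (F_le S n (i - 1)) hsm hind
  refine h.trans ?_
  have hint0 : ∫ ω, Psi S n i j ω ∂ℙ = 0 := by
    have hIndC : Indep (MeasurableSpace.comap (S.Z n i j) inferInstance)
        (MeasurableSpace.comap (S.X n i) inferInstance) ℙ := by
      refine indep_of_indep_of_le_left (indep_of_indep_of_le_right
        (indep_fam S n (T := {Sum.inr ⟨(i, j), hq⟩}) (T' := {Sum.inl i})
          (by simp)) ?_) ?_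
      · exact comap_X_le_biSup S rfl
      · exact comap_Z_le_biSup S (q := ⟨(i, j), hq⟩) rfl
    have hIF : IndepFun (S.Z n i j) (condh S n i j) ℙ := by
      exact indep_of_indep_of_le_right hIndC
        (stronglyMeasurable_condExp.measurable.comap_le)
    have := hIF.integral_mul_eq_mul_integral (S.measZ n i j).aestronglyMeasurable
      (int_condh S n i j).aestronglyMeasurable
    have hPsi : Psi S n i j = S.Z n i j * condh S n i j := rfl
    rw [hPsi, this, integral_condh S n i j (by omega), mul_zero]
  rw [hint0]

lemma condexp_hXX_F {n i j : ℕ} (hj1 : 1 ≤ j) (hjlt : j < i) :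
    condExp (F S n (i - 1)) ℙ (hXX S n i j) =ᵐ[ℙ] condh S n j i := by
  have hij : i ≠ j := by omega
  have hsym : hXX S n i j = hXX S n j i := funext fun ω => S.symmh n _ _
  have h2 : (⨆ t ∈ TG n (i - 1) \ {Sum.inl j}, MeasurableSpace.comap (fam S n t)
      inferInstance) ≤ (inferInstance : MeasurableSpace Ω) :=
    iSup₂_le fun t _ => fam_le S n t
  have h1 : (MeasurableSpace.comap (S.X n i) inferInstance ⊔
      MeasurableSpace.comap (S.X n j) inferInstance) ≤ (inferInstance : MeasurableSpace Ω) :=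
    sup_le (S.measX n i).comap_le (S.measX n j).comap_le
  have hindep : Indep (MeasurableSpace.comap (S.X n i) inferInstance ⊔
      MeasurableSpace.comap (S.X n j) inferInstance)
      (⨆ t ∈ TG n (i - 1) \ {Sum.inl j}, MeasurableSpace.comap (fam S n t) inferInstance) ℙ := by
    have hdisj : Disjoint ({Sum.inl i, Sum.inl j} : Set (ℕ ⊕ {q : ℕ × ℕ // q.1 < q.2}))
        (TG n (i - 1) \ {Sum.inl j}) := by
      rw [Set.disjoint_left]
      rintro t ht
      simp only [Set.mem_insert_iff, Set.mem_singleton_iff] at ht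
      rcases ht with rfl | rfl
      · exact fun h => inl_not_mem_TG (by omega) h.1
      · exact fun h => h.2 rfl
    refine indep_of_indep_of_le_left (indep_fam S n hdisj) ?_
    exact sup_le (comap_X_le_biSup S (Set.mem_insert _ _))
      (comap_X_le_biSup S (Set.mem_insert_of_mem _ rfl))
  have hg : StronglyMeasurable[MeasurableSpace.comap (S.X n i) inferInstance ⊔
      MeasurableSpace.comap (S.X n j) inferInstance] (hXX S n i j) := by
    apply Measurable.stronglyMeasurable
    exact (S.meash n).comp (((Measurable.of_comap_le le_sup_left)).prodMk
      ((Measurable.of_comap_le le_sup_right)))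
  have hfreeze := condexp_sup_indep' (mc := MeasurableSpace.comap (S.X n j) inferInstance)
    h1 h2 le_sup_right hindep hg (int_hXX S n i j hij)
  have hGle : F S n (i - 1) ≤ MeasurableSpace.comap (S.X n j) inferInstance ⊔
      (⨆ t ∈ TG n (i - 1) \ {Sum.inl j}, MeasurableSpace.comap (fam S n t) inferInstance) := by
    refine (F_le_biSup S n (i - 1)).trans (iSup₂_le fun t ht => ?_)
    by_cases hts : t = Sum.inl j
    · subst hts
      exact le_sup_left
    · exact le_trans (le_biSup (fun t => MeasurableSpace.comap (fam S n t) inferInstance)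
        (Set.mem_diff_of_mem ht (by simp [hts]))) le_sup_right
  have hsupm0 : (MeasurableSpace.comap (S.X n j) inferInstance ⊔
      (⨆ t ∈ TG n (i - 1) \ {Sum.inl j}, MeasurableSpace.comap (fam S n t) inferInstance)) ≤
      (inferInstance : MeasurableSpace Ω) := sup_le (S.measX n j).comap_le h2
  have htower := (condExp_condExp_of_le hGle hsupm0 (f := hXX S n i j) (μ := ℙ)).symm
  refine htower.trans ((condExp_congr_ae hfreeze).trans ?_)
  have hmc : condExp (MeasurableSpace.comap (S.X n j) inferInstance) ℙ (hXX S n i j) =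
      condh S n j i := by rw [hsym]; rfl
  rw [hmc]
  have hfin : condExp (F S n (i - 1)) ℙ (condh S n j i) = condh S n j i :=
    condExp_of_stronglyMeasurable (F_le S n (i - 1))
      (stronglyMeasurable_condExp.mono (comapX_le_F S hj1 (by omega))) (int_condh S n j i)
  rw [hfin]

lemma condexp_PhiT_F {n i j : ℕ} (hj1 : 1 ≤ j) (hjlt : j < i) (hi1 : 1 ≤ i) (hin : i ≤ n) :
    condExp (F S n (i - 1)) ℙ (PhiT S n i j) =ᵐ[ℙ] fun _ => (0 : ℝ) := by
  have hij : i ≠ j := by omega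
  have hPhiT : PhiT S n i j = S.Z n i j * hT S n i j := by
    funext ω
    simp only [PhiT, Phi, Psi, hT, Pi.mul_apply, hXX]
    rw [← S.symmZ n i j]
    ring
  have hZG := Z_measF_of_lt S hj1 hjlt hi1 hin
  have hmul := condExp_mul_of_stronglyMeasurable_left (m := F S n (i - 1)) (μ := ℙ)
    hZG.stronglyMeasurable (by rw [← hPhiT]; exact int_PhiT S n i j hij)
    (int_hT S n i j hij)
  have hhT : condExp (F S n (i - 1)) ℙ (hT S n i j) =ᵐ[ℙ] fun _ => (0 : ℝ) := by
    have hdef : hT S n i j = hXX S n i j - condh S n i j - condh S n j i := rfl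
    have hsub1 := condExp_sub (m := F S n (i - 1)) (μ := ℙ)
      ((int_hXX S n i j hij).sub (int_condh S n i j)) (int_condh S n j i)
    have hsub2 := condExp_sub (m := F S n (i - 1)) (μ := ℙ)
      (int_hXX S n i j hij) (int_condh S n i j)
    have hji : condExp (F S n (i - 1)) ℙ (condh S n j i) = condh S n j i :=
      condExp_of_stronglyMeasurable (F_le S n (i - 1))
        (stronglyMeasurable_condExp.mono (comapX_le_F S hj1 (by omega))) (int_condh S n j i)
    rw [hdef]
    filter_upwards [hsub1, hsub2, condexp_hXX_F S hj1 hjlt,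
      condexp_condh_F S (n := n) (i := i) (j := j) (r := i - 1) hij
        (show i - 1 < i by omega)] with ω e1 e2 e3 e4
    rw [e1, Pi.sub_apply, e2, Pi.sub_apply, e3, e4, congrFun hji ω]
    simp
  rw [hPhiT]
  filter_upwards [hmul, hhT] with ω h1 h2
  rw [h1, Pi.mul_apply, h2]
  simp

end Aux

lemma ae_sum_zero {Ω : Type*} [MeasureSpace Ω] {ι : Type*} (s : Finset ι) (f : ι → Ω → ℝ)
    (h : ∀ j ∈ s, f j =ᵐ[ℙ] fun _ => (0 : ℝ)) :
    (∑ j ∈ s, f j : Ω → ℝ) =ᵐ[ℙ] fun _ => (0 : ℝ) := by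
  classical
  induction s using Finset.induction_on with
  | empty => simp [Filter.EventuallyEq]
  | @insert a s ha ih =>
      rw [Finset.sum_insert ha]
      filter_upwards [h _ (Finset.mem_insert_self _ _),
        ih (fun j hj' => h j (Finset.mem_insert_of_mem hj'))] with ω h1 h2
      simp only [Pi.add_apply, h1, h2]
      simp

/-- The `ξ_i`, `1 ≤ i ≤ n`, form a martingale difference sequence with respect to
`F_i = σ(X_1,…,X_i, Z_{lm} : l ≤ i, m ≠ l)`: each `ξ_i` is `F_i`-measurable and
`E[ξ_i | F_{i-1}] = 0` almost surely. -/
theorem stmt10 {Ω : Type*} [MeasureSpace Ω] [IsProbabilityMeasure (ℙ : Measure Ω)]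
    (S : Setting Ω) (n i : ℕ) (hi : i ∈ Icc 1 n) :
    Measurable[F S n i] (xi S n i) ∧
    condExp (F S n (i - 1)) ℙ (xi S n i) =ᵐ[ℙ] fun _ => (0 : ℝ) := by
  obtain ⟨hi1, hin⟩ := Finset.mem_Icc.mp hi
  constructor
  · -- measurability
    have hXi : Measurable[F S n i] (S.X n i) :=
      Measurable.of_comap_le (comapX_le_F S hi1 le_rfl)
    apply Measurable.const_mul
    apply Measurable.add
    · apply Finset.measurable_sum
      intro j hj
      obtain ⟨hji, hj'⟩ := Finset.mem_erase.mp hj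
      exact (Measurable.of_comap_le (comapZ_le_F S hi1 le_rfl hj' hji)).mul
        (stronglyMeasurable_condExp.measurable.mono (comapX_le_F S hi1 le_rfl) le_rfl)
    · apply Finset.measurable_sum
      intro j hj
      obtain ⟨hj1, hjlt⟩ := Finset.mem_Ico.mp hj
      have hXj : Measurable[F S n i] (S.X n j) :=
        Measurable.of_comap_le (comapX_le_F S hj1 (by omega))
      have hZ : Measurable[F S n i] (S.Z n i j) := by
        rw [S.symmZ n i j]
        exact Measurable.of_comap_le (comapZ_le_F S hj1 (by omega)
          (Finset.mem_Icc.mpr ⟨hi1, hin⟩) (by omega))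
      have hZ' : Measurable[F S n i] (S.Z n j i) := by
        rw [← S.symmZ n i j]; exact hZ
      have hcondh1 : Measurable[F S n i] (condh S n i j) :=
        stronglyMeasurable_condExp.measurable.mono (comapX_le_F S hi1 le_rfl) le_rfl
      have hcondh2 : Measurable[F S n i] (condh S n j i) :=
        stronglyMeasurable_condExp.measurable.mono (comapX_le_F S hj1 (by omega)) le_rfl
      exact ((hZ.mul ((S.meash n).comp (hXi.prodMk hXj))).sub (hZ.mul hcondh1)).sub
        (hZ'.mul hcondh2)
  · -- martingale difference property
    have hintA : ∀ j ∈ (Icc 1 n).erase i, Integrable (Psi S n i j) ℙ :=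
      fun j _ => int_Psi S n i j
    have hintB : ∀ j ∈ Ico 1 i, Integrable (PhiT S n i j) ℙ := by
      intro j hj
      obtain ⟨hj1, hjlt⟩ := Finset.mem_Ico.mp hj
      exact int_PhiT S n i j (by omega)
    have hxi : xi S n i = ((1 : ℝ) / (n * theta S n)) •
        ((∑ j ∈ (Icc 1 n).erase i, Psi S n i j) + ∑ j ∈ Ico 1 i, PhiT S n i j) := by
      funext ω
      simp [xi, Finset.sum_apply, Pi.add_apply, Pi.smul_apply, smul_eq_mul]
    have hA : condExp (F S n (i - 1)) ℙ (∑ j ∈ (Icc 1 n).erase i, Psi S n i j) =ᵐ[ℙ]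
        fun _ => (0 : ℝ) := by
      refine (condExp_finsetSum hintA (F S n (i - 1))).trans (ae_sum_zero _ _ ?_)
      intro j hj
      obtain ⟨hji, hj'⟩ := Finset.mem_erase.mp hj
      obtain ⟨hj1, hjn⟩ := Finset.mem_Icc.mp hj'
      rcases lt_or_gt_of_ne hji with h | h
      · exact condexp_Psi_F_of_lt S hj1 h hi1 hin
      · exact condexp_Psi_F_of_gt S h hi1
    have hB : condExp (F S n (i - 1)) ℙ (∑ j ∈ Ico 1 i, PhiT S n i j) =ᵐ[ℙ]
        fun _ => (0 : ℝ) := by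
      refine (condExp_finsetSum hintB (F S n (i - 1))).trans (ae_sum_zero _ _ ?_)
      intro j hj
      obtain ⟨hj1, hjlt⟩ := Finset.mem_Ico.mp hj
      exact condexp_PhiT_F S hj1 hjlt hi1 hin
    have hadd := condExp_add (μ := ℙ) (m := F S n (i - 1))
      (integrable_finset_sum' _ hintA) (integrable_finset_sum' _ hintB)
    have hsmul := condExp_smul (m := F S n (i - 1)) (μ := ℙ) ((1 : ℝ) / (n * theta S n))
      ((∑ j ∈ (Icc 1 n).erase i, Psi S n i j) + ∑ j ∈ Ico 1 i, PhiT S n i j)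
    rw [hxi]
    refine hsmul.trans ?_
    filter_upwards [hadd, hA, hB] with ω e1 e2 e3
    simp only [Pi.smul_apply, e1, Pi.add_apply, e2, e3]
    simp


end IncompleteU
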